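/- (In-version criterion of Crauser et al., proved as part (b) of the lemma on SP₃.) Let k ∉ F be a vertex such that D k ≤ (⨅ {D y : y ∉ F}) + (⨅ {w v k : E v k}), where the second infimum is over all in-edges of k. Then D k = cost k. -/

import Mathlib

/-!
Every `F`-path is a path, so `cost k ≤ D k`. Conversely, a path to `k` that is not an
`F`-path has a first vertex `y ∉ F` strictly before `k`. Its part up to `y` is an `F`-path,
costing at least `D y`, and its part from `y` on still ends with an edge `v → k`, costing at
least `w v k`. Hence every such path costs at least
`(⨅ {D y : y ∉ F}) + (⨅ {w v k : E v k}) ≥ D k`.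
-/

open scoped ENNReal

variable {V : Type*}

/-- `IsPath E v0 x p` means `p` is a finite sequence of vertices starting at `v0`,
ending at `x`, with consecutive vertices joined by edges of `E`. -/
def IsPath (E : V → V → Prop) (v0 x : V) (p : List V) : Prop :=
  p.Chain' E ∧ p.head? = some v0 ∧ p.getLast? = some x

/-- The cost of a path: the sum of the weights of its consecutive edges. -/
noncomputable def pathCost (w : V → V → ℝ≥0∞) (p : List V) : ℝ≥0∞ :=
  ((p.zip p.tail).map fun q => w q.1 q.2).sum

/-- `cost E w v0 x` : the infimum of the costs of all paths from `v0` to `x`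
(`∞` if `x` is unreachable from `v0`). -/
noncomputable def cost (E : V → V → Prop) (w : V → V → ℝ≥0∞) (v0 x : V) : ℝ≥0∞ :=
  ⨅ p : {p : List V // IsPath E v0 x p}, pathCost w p.1

/-- An `F`-path from `v0` to `x` : a path all of whose vertices other than the
final vertex `x` lie in `F`. `Dfun E w v0 F x` is the infimum of the costs of
`F`-paths from `v0` to `x` (`∞` if no `F`-path to `x` exists). -/
noncomputable def Dfun (E : V → V → Prop) (w : V → V → ℝ≥0∞) (v0 : V) (F : Set V)
    (x : V) : ℝ≥0∞ :=
  ⨅ p : {p : List V // IsPath E v0 x p ∧ ∀ v ∈ p.dropLast, v ∈ F}, pathCost w p.1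

theorem List.exists_eq_append_cons_of_exists_not {α : Type*} {P : α → Prop} {l : List α}
    (h : ∃ x ∈ l, ¬ P x) : ∃ a y b, l = a ++ y :: b ∧ (∀ z ∈ a, P z) ∧ ¬ P y := by
  classical
  set rest := l.dropWhile fun x => decide (P x)
  have hrest : rest ≠ [] := by simpa [rest] using h
  refine ⟨l.takeWhile fun x => decide (P x), rest.head hrest, rest.tail, ?_,
    fun z hz => by simpa using List.mem_takeWhile_imp hz, ?_⟩
  · rw [List.cons_head_tail, List.takeWhile_append_dropWhile]
  · simpa using List.head_dropWhile_not _ hrest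

section pathCost

variable (w : V → V → ℝ≥0∞)

theorem pathCost_cons_cons (x y : V) (l : List V) :
    pathCost w (x :: y :: l) = w x y + pathCost w (y :: l) := rfl

theorem pathCost_append_cons (a : List V) (y : V) (b : List V) :
    pathCost w (a ++ y :: b) = pathCost w (a ++ [y]) + pathCost w (y :: b) := by
  induction a with
  | nil => simp [pathCost]
  | cons x a ih =>
    cases a with
    | nil => simp [pathCost]
    | cons x' a =>
      simp only [List.cons_append, pathCost_cons_cons] at ih ⊢
      rw [ih, add_assoc]

theorem exists_rel_le_pathCost_append_singleton {E : V → V → Prop} {l : List V} {k : V}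
    (hl : l ≠ []) (hchain : (l ++ [k]).IsChain E) :
    ∃ u, E u k ∧ w u k ≤ pathCost w (l ++ [k]) := by
  refine ⟨l.getLast hl,
    by simpa using hchain.rel_getLast_head_of_append hl (List.cons_ne_nil k []), ?_⟩
  conv_rhs => rw [← List.dropLast_append_getLast hl, List.append_assoc, List.singleton_append,
    pathCost_append_cons]
  simp [pathCost]

end pathCost

section paths

variable {E : V → V → Prop} (w : V → V → ℝ≥0∞) {v0 : V} {F : Set V}

theorem Dfun_le_pathCost {x : V} {p : List V} (hp : IsPath E v0 x p)
    (hF : ∀ v ∈ p.dropLast, v ∈ F) : Dfun E w v0 F x ≤ pathCost w p :=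
  iInf_le (fun q : {p : List V // IsPath E v0 x p ∧ ∀ v ∈ p.dropLast, v ∈ F} => pathCost w q.1)
    ⟨p, hp, hF⟩

theorem cost_le_Dfun (x : V) : cost E w v0 x ≤ Dfun E w v0 F x :=
  le_iInf fun p => iInf_le (fun q : {p : List V // IsPath E v0 x p} => pathCost w q.1) ⟨p.1, p.2.1⟩

theorem iInf_Dfun_add_iInf_weight_le_pathCost {k : V} {p : List V} (hp : IsPath E v0 k p)
    (hF : ∃ v ∈ p.dropLast, v ∉ F) :
    (⨅ y : {y : V // y ∉ F}, Dfun E w v0 F y.1) + (⨅ v : {v : V // E v k}, w v.1 k) ≤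
      pathCost w p := by
  obtain ⟨hchain, hhead, hlast⟩ := hp
  obtain ⟨a, y, c, hsplit, ha, hy⟩ := List.exists_eq_append_cons_of_exists_not hF
  obtain rfl : p = a ++ y :: (c ++ [k]) := by
    rw [← List.dropLast_append_getLast? k hlast, hsplit]
    simp
  have hprefix : IsPath E v0 y (a ++ [y]) :=
    ⟨hchain.prefix ⟨c ++ [k], by simp⟩, by simpa [List.head?_append] using hhead,
      List.getLast?_concat⟩
  obtain ⟨u, hu, hwu⟩ := exists_rel_le_pathCost_append_singleton w (List.cons_ne_nil y c)
    hchain.right_of_append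
  calc _ ≤ Dfun E w v0 F y + w u k :=
        add_le_add (iInf_le_of_le ⟨y, hy⟩ le_rfl) (iInf_le_of_le ⟨u, hu⟩ le_rfl)
    _ ≤ pathCost w (a ++ [y]) + pathCost w (y :: (c ++ [k])) :=
        add_le_add (Dfun_le_pathCost w hprefix (by rwa [List.dropLast_concat])) hwu
    _ = pathCost w (a ++ y :: (c ++ [k])) := (pathCost_append_cons w a y _).symm

end paths

theorem in_version_criterion_general (E : V → V → Prop) (w : V → V → ℝ≥0∞)
    (v0 : V) (F : Set V) (k : V)
    (hD : Dfun E w v0 F k ≤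
      (⨅ y : {y : V // y ∉ F}, Dfun E w v0 F y.1) +
      (⨅ v : {v : V // E v k}, w v.1 k)) :
    Dfun E w v0 F k = cost E w v0 k := by
  refine le_antisymm (le_iInf fun ⟨p, hp⟩ => ?_) (cost_le_Dfun w k)
  by_cases hF : ∀ v ∈ p.dropLast, v ∈ F
  · exact Dfun_le_pathCost w hp hF
  · push Not at hF
    exact hD.trans (iInf_Dfun_add_iInf_weight_le_pathCost w hp hF)

/-- In-version criterion of Crauser et al.: if `k ∉ F` and
`D k ≤ (⨅ {D y : y ∉ F}) + (⨅ {w v k : E v k})`, then `D k = cost k`. -/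
theorem in_version_criterion [Fintype V] (E : V → V → Prop) (w : V → V → ℝ≥0∞)
    (hpos : ∀ u v, E u v → 0 < w u v) (hfin : ∀ u v, E u v → w u v < ⊤)
    (v0 : V) (F : Set V) (hv0 : v0 ∈ F) (k : V) (hk : k ∉ F)
    (hD : Dfun E w v0 F k ≤
      (⨅ y : {y : V // y ∉ F}, Dfun E w v0 F y.1) +
      (⨅ v : {v : V // E v k}, w v.1 k)) :
    Dfun E w v0 F k = cost E w v0 k :=
  in_version_criterion_general E w v0 F k hD
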